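/- arXiv:nlin/0101024 — 3 statements merged into one kernel-verified Lean document; each statement's English description precedes it below -/
import Mathlib

section
/- Let κ ∈ C, M ≥ 2, and k ∈ {1, …, M−1}. Set φ = kπ/M, choose r with r² = cos²φ + κ and r + cos φ ≠ 0, and put Δ = e^{iφ}(r + cos φ), Δ* = e^{−iφ}(r + cos φ), Λ = ΔΔ*. Assume Δ ≠ Δ* (i.e., sin φ · (r + cos φ) ≠ 0). Then for the homogeneous classical Lax matrix L(Λ) = [[1 − κ/Λ, −ε/Λ], [1/ε, 0]] one has (L(Λ)^M)₁₂ = 0; that is, B(Λ(φ_k)) = 0, so Λ(φ_k), k = 1,…,M−1, are zeros of the off-diagonal monodromy element. -/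
open Matrix Complex

/-! The Lax matrix satisfies `L² = (a + b) L - a b` with `a = 1/Δ`, `b = 1/Δ*`, so by Lagrange
interpolation `(a - b) Lⁿ = (aⁿ - bⁿ) L + (a bⁿ - aⁿ b)`. At `φ = kπ/M` the ratio
`b / a = e^{2iφ}` is an `M`-th root of unity, so `a^M = b^M`, and as `a ≠ b` the monodromy `L^M`
is the scalar `a^M`; in particular its off-diagonal entry vanishes. -/

section QuadraticRelation

variable {R A : Type*} [CommRing R] [Ring A] [Algebra R A]

theorem sub_smul_pow_eq_of_sq_eq {x : A} {a b : R} (hx : x ^ 2 = (a + b) • x - (a * b) • 1)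
    (n : ℕ) : (a - b) • x ^ n = (a ^ n - b ^ n) • x + (a * b ^ n - a ^ n * b) • (1 : A) := by
  induction n with
  | zero => simp only [pow_zero, sub_self, zero_smul, mul_one, one_mul, zero_add]
  | succ n ih =>
    calc (a - b) • x ^ (n + 1) = ((a - b) • x ^ n) * x := by rw [pow_succ, smul_mul_assoc]
      _ = (a ^ n - b ^ n) • x ^ 2 + (a * b ^ n - a ^ n * b) • x := by
        rw [ih, add_mul, smul_mul_assoc, smul_mul_assoc, one_mul, sq]
      _ = _ := by rw [hx]; module

theorem pow_eq_smul_one_of_sq_eq {K : Type*} [Field K] [Algebra K A] {x : A} {a b : K}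
    (hab : a ≠ b) (hx : x ^ 2 = (a + b) • x - (a * b) • 1) {n : ℕ} (hn : a ^ n = b ^ n) :
    x ^ n = a ^ n • (1 : A) := by
  have h := sub_smul_pow_eq_of_sq_eq hx n
  rw [hn, sub_self, zero_smul, zero_add, ← hn,
    show a * a ^ n - a ^ n * b = (a - b) * a ^ n by ring, mul_smul] at h
  exact smul_right_injective A (sub_ne_zero.mpr hab) h

end QuadraticRelation

theorem laxMatrix_sq {K : Type*} [Field K] (κ ε Λ : K) (hε : ε ≠ 0) :
    !![1 - κ / Λ, -ε / Λ; 1 / ε, 0] ^ 2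
      = (1 - κ / Λ) • !![1 - κ / Λ, -ε / Λ; 1 / ε, 0] - Λ⁻¹ • (1 : Matrix (Fin 2) (Fin 2) K) := by
  ext i j
  fin_cases i <;> fin_cases j <;> simp [sq, Matrix.mul_apply, Fin.sum_univ_two] <;> field_simp; ring

theorem exp_I_mul_pow_eq_exp_neg_I_mul_pow {φ : ℂ} {M : ℕ} (k : ℤ) (h : M * φ = k * Real.pi) :
    exp (I * φ) ^ M = exp (-(I * φ)) ^ M := by
  rw [← exp_nat_mul, ← exp_nat_mul, exp_eq_exp_iff_exists_int]
  exact ⟨k, by linear_combination (2 * I) * h⟩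

theorem inv_add_inv_eq_one_sub_div {φ r κ Δ Δs Λ : ℂ} (hr : r ^ 2 = cos φ ^ 2 + κ)
    (hr0 : r + cos φ ≠ 0) (hΔ : Δ = exp (I * φ) * (r + cos φ))
    (hΔs : Δs = exp (-(I * φ)) * (r + cos φ)) (hΛ : Λ = Δ * Δs) :
    Δ⁻¹ + Δs⁻¹ = 1 - κ / Λ := by
  have hcos : exp (I * φ) + exp (-(I * φ)) = 2 * cos φ := by
    rw [two_cos, neg_mul, mul_comm φ I]
  have hinv : exp (I * φ) * exp (-(I * φ)) = 1 := by rw [← exp_add, add_neg_cancel, exp_zero]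
  have he : exp (I * φ) ≠ 0 := exp_ne_zero _
  have he' : exp (-(I * φ)) ≠ 0 := exp_ne_zero _
  rw [hΛ, hΔ, hΔs]
  field_simp
  linear_combination (r + cos φ) * hcos - hr - (r + cos φ) ^ 2 * hinv

theorem homogeneous_toda_B_zero_general (κ ε : ℂ) (hε : ε = 1 ∨ ε = -1)
    (M k : ℕ) (hM : 2 ≤ M)
    (φ : ℂ) (hφ : φ = (k : ℂ) * (Real.pi : ℂ) / (M : ℂ))
    (r : ℂ) (hr : r ^ 2 = Complex.cos φ ^ 2 + κ)
    (hr0 : r + Complex.cos φ ≠ 0)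
    (Δ Δs Λ : ℂ)
    (hΔ : Δ = Complex.exp (Complex.I * φ) * (r + Complex.cos φ))
    (hΔs : Δs = Complex.exp (-(Complex.I * φ)) * (r + Complex.cos φ))
    (hΛ : Λ = Δ * Δs) (hne : Δ ≠ Δs)
    (L : Matrix (Fin 2) (Fin 2) ℂ)
    (hL : L = !![1 - κ / Λ, -ε / Λ; 1 / ε, 0]) :
    (L ^ M) 0 1 = 0 := by
  have hε0 : ε ≠ 0 := by rcases hε with rfl | rfl <;> norm_num
  have hL_sq : L ^ 2 = (Δ⁻¹ + Δs⁻¹) • L - (Δ⁻¹ * Δs⁻¹) • 1 := by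
    rw [inv_add_inv_eq_one_sub_div hr hr0 hΔ hΔs hΛ, ← mul_inv, ← hΛ, hL]
    exact laxMatrix_sq κ ε Λ hε0
  have hMφ : (M : ℂ) * φ = ((k : ℤ) : ℂ) * Real.pi := by
    rw [hφ, Int.cast_natCast]; field_simp [show (M : ℂ) ≠ 0 by norm_cast; omega]
  have h_pow : Δ⁻¹ ^ M = Δs⁻¹ ^ M := by
    rw [hΔ, hΔs, inv_pow, inv_pow, mul_pow, mul_pow, exp_I_mul_pow_eq_exp_neg_I_mul_pow k hMφ]
  rw [pow_eq_smul_one_of_sq_eq (inv_injective.ne hne) hL_sq h_pow]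
  simp

/-- At the special points `φ = kπ/M`, `k = 1, …, M-1`, the
off-diagonal element of the homogeneous classical monodromy vanishes:
`(L(Λ(φ))^M)₁₂ = 0`, where `L = [[1 - κ/Λ, -ε/Λ],[1/ε, 0]]`,
`Δ = e^{iφ}(r + cos φ)`, `Δ* = e^{-iφ}(r + cos φ)`, `r² = cos²φ + κ`,
`Λ = Δ Δ*`, assuming `r + cos φ ≠ 0` and `Δ ≠ Δ*`. -/
theorem homogeneous_toda_B_zero (κ ε : ℂ) (hε : ε = 1 ∨ ε = -1)
    (M k : ℕ) (hM : 2 ≤ M) (hk1 : 1 ≤ k) (hk2 : k ≤ M - 1)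
    (φ : ℂ) (hφ : φ = (k : ℂ) * (Real.pi : ℂ) / (M : ℂ))
    (r : ℂ) (hr : r ^ 2 = Complex.cos φ ^ 2 + κ)
    (hr0 : r + Complex.cos φ ≠ 0)
    (Δ Δs Λ : ℂ)
    (hΔ : Δ = Complex.exp (Complex.I * φ) * (r + Complex.cos φ))
    (hΔs : Δs = Complex.exp (-(Complex.I * φ)) * (r + Complex.cos φ))
    (hΛ : Λ = Δ * Δs) (hne : Δ ≠ Δs)
    (L : Matrix (Fin 2) (Fin 2) ℂ)
    (hL : L = !![1 - κ / Λ, -ε / Λ; 1 / ε, 0]) :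
    (L ^ M) 0 1 = 0 :=
  homogeneous_toda_B_zero_general κ ε hε M k hM φ hφ r hr hr0 Δ Δs Λ hΔ hΔs hΛ hne L hL
end

section
/- Let R be a unital ring containing a central invertible element ω^{1/2} (with ω = (ω^{1/2})²) and elements 𝐮 (invertible), 𝐰 with 𝐮𝐰 = ω𝐰𝐮. Let λ_φ, κ_φ be central elements with λ_φ invertible. Then the 2×2 matrix ℓ̃_φ(λ_φ) = [[1 − ω^{1/2}κ_φ𝐰, −ω^{1/2}λ_φ^{−1}(1 − ω^{1/2}κ_φ𝐰)𝐮], [−ω^{1/2}λ_φ 𝐮^{−1}𝐰, 𝐰]] factorizes as the outer product of the column vector (1 − ω^{1/2}κ_φ𝐰, −ω^{1/2}λ_φ 𝐮^{−1}𝐰)ᵀ with the row vector (1, −ω^{1/2}λ_φ^{−1}𝐮). In particular one must use 𝐮^{−1}𝐰𝐮 = ω^{−1}𝐰. -/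
open Matrix

/-! Since `ω^{1/2}` and `λ_φ` are central, the only entry that is not a mere rearrangement
of factors is the lower right one, which reduces to `ω · 𝐮⁻¹𝐰𝐮 = 𝐰`, i.e. to the Weyl
relation conjugated by `𝐮`. -/

theorem Units.inv_mul_mul_eq_of_mul_eq_mul {M : Type*} [Monoid M] (u q : Mˣ) (w : M)
    (hqu : Commute (q : M) u) (h : (u : M) * w = q * (w * u)) :
    ↑u⁻¹ * w * u = ↑q⁻¹ * w :=
  calc ↑u⁻¹ * w * u = ↑u⁻¹ * (↑q⁻¹ * (u * w)) := by
        rw [h, Units.inv_mul_cancel_left, mul_assoc]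
    _ = ↑q⁻¹ * w := by
        rw [(hqu.units_inv_left.units_inv_right).symm.left_comm, Units.inv_mul_cancel_left]

theorem Matrix.vecMulVec_fin_two {α : Type*} [Mul α] (a c x y : α) :
    vecMulVec ![a, c] ![x, y] = !![a * x, a * y; c * x, c * y] := by
  ext i j
  fin_cases i <;> fin_cases j <;> rfl

theorem dst_lax_factorization_general {R : Type*} [Ring R]
    (ωh : R) (hωh : ∀ r : R, ωh * r = r * ωh) (hωu : IsUnit ωh)
    (u lphi : Rˣ) (w kphi : R)
    (hlc : ∀ r : R, (lphi : R) * r = r * (lphi : R))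
    (hweyl : (u : R) * w = ωh ^ 2 * (w * (u : R)))
    (ℓ : Matrix (Fin 2) (Fin 2) R)
    (hℓ : ℓ = !![1 - ωh * kphi * w, -(ωh * (↑lphi⁻¹ : R) * ((1 - ωh * kphi * w) * (u : R)));
                 -(ωh * (lphi : R) * ((↑u⁻¹ : R) * w)), w]) :
    ℓ = Matrix.of (fun i j =>
        (![1 - ωh * kphi * w, -(ωh * (lphi : R) * ((↑u⁻¹ : R) * w))] i) *
        (![1, -(ωh * (↑lphi⁻¹ : R) * (u : R))] j)) ∧
    (↑u⁻¹ : R) * w * (u : R) = ((↑hωu.unit⁻¹ : R)) ^ 2 * w := by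
  have hω : ∀ r, Commute ωh r := hωh
  have hl : ∀ r, Commute (lphi : R) r := hlc
  have hlinv : ∀ r, Commute (↑lphi⁻¹ : R) r := fun r => (hl r).units_inv_left
  have hconj : (↑u⁻¹ : R) * w * u = (↑hωu.unit⁻¹ : R) ^ 2 * w := by
    rw [← Units.val_pow_eq_pow_val, inv_pow]
    refine Units.inv_mul_mul_eq_of_mul_eq_mul u _ w ?_ ?_ <;>
      simp only [Units.val_pow_eq_pow_val, IsUnit.unit_spec]
    exacts [(hω u).pow_left 2, hweyl]
  refine ⟨?_, hconj⟩
  have h_top_right : (1 - ωh * kphi * w) * -(ωh * ↑lphi⁻¹ * u)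
      = -(ωh * ↑lphi⁻¹ * ((1 - ωh * kphi * w) * u)) := by
    rw [mul_neg, ((hω _).mul_left (hlinv _)).left_comm]
  have h_bottom_right : -(ωh * lphi * (↑u⁻¹ * w)) * -(ωh * ↑lphi⁻¹ * u) = w :=
    calc -(ωh * lphi * (↑u⁻¹ * w)) * -(ωh * ↑lphi⁻¹ * u)
        = ωh * lphi * (ωh * ↑lphi⁻¹) * (↑u⁻¹ * w * u) := by
          rw [neg_mul_neg, ((hω _).mul_left (hlinv _)).symm.mul_mul_mul_comm]
      _ = ωh ^ 2 * ((↑hωu.unit⁻¹ : R) ^ 2 * w) := by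
          rw [(hl ωh).mul_mul_mul_comm, Units.mul_inv, mul_one, ← sq, hconj]
      _ = w := by
          rw [← mul_assoc, ← (hω _).mul_pow, IsUnit.mul_val_inv, one_pow, one_mul]
  rw [hℓ, ← vecMulVec.eq_def, vecMulVec_fin_two, mul_one, mul_one, h_top_right, h_bottom_right]

/-- In a unital ring with a central invertible `ω^{1/2}`
(`ω = (ω^{1/2})²`), an invertible `𝐮` and `𝐰` with `𝐮𝐰 = ω𝐰𝐮`, and central
invertible `λ_φ` and central `κ_φ`, the auxiliary Lax matrix at the
degeneration point factorizes as the outer product of the column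
`(1 - ω^{1/2}κ_φ𝐰, -ω^{1/2}λ_φ 𝐮⁻¹𝐰)ᵀ` with the row `(1, -ω^{1/2}λ_φ⁻¹𝐮)`;
in particular `𝐮⁻¹𝐰𝐮 = ω⁻¹𝐰`. -/
theorem dst_lax_factorization {R : Type*} [Ring R]
    (ωh : R) (hωh : ∀ r : R, ωh * r = r * ωh) (hωu : IsUnit ωh)
    (u lphi : Rˣ) (w kphi : R)
    (hlc : ∀ r : R, (lphi : R) * r = r * (lphi : R))
    (hkc : ∀ r : R, kphi * r = r * kphi)
    (hweyl : (u : R) * w = ωh ^ 2 * (w * (u : R)))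
    (ℓ : Matrix (Fin 2) (Fin 2) R)
    (hℓ : ℓ = !![1 - ωh * kphi * w, -(ωh * (↑lphi⁻¹ : R) * ((1 - ωh * kphi * w) * (u : R)));
                 -(ωh * (lphi : R) * ((↑u⁻¹ : R) * w)), w]) :
    ℓ = Matrix.of (fun i j =>
        (![1 - ωh * kphi * w, -(ωh * (lphi : R) * ((↑u⁻¹ : R) * w))] i) *
        (![1, -(ωh * (↑lphi⁻¹ : R) * (u : R))] j)) ∧
    (↑u⁻¹ : R) * w * (u : R) = ((↑hωu.unit⁻¹ : R)) ^ 2 * w :=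
  dst_lax_factorization_general ωh hωh hωu u lphi w kphi hlc hweyl ℓ hℓ
end

section
/- Let R be a unital ring with a central invertible element ω^{1/2}, ω = (ω^{1/2})², and elements 𝐮, 𝐰 with 𝐮𝐰 = ω𝐰𝐮. Let λ, μ, κ be central. Define the Toda Lax matrix ℓ(λ) = [[1 + (κ/λ)𝐮𝐰, −(ω^{1/2}/λ)𝐮], [𝐰, 0]] and the 4×4 R-matrix R(λ,μ) with nonzero entries R₁₁ = R₄₄ = λ − ωμ, R₂₂ = λ − μ, R₂₃ = μ(1 − ω), R₃₂ = λ(1 − ω), R₃₃ = ω(λ − μ). Then the intertwining relation R(λ,μ)·(ℓ(λ) ⊗ ℓ(μ)) = (1 ⊗ ℓ(μ))·(ℓ(λ) ⊗ 1)·R(λ,μ) holds, where both sides are 4×4 matrices over R and the tensor factors share the same Weyl elements 𝐮, 𝐰. -/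
/-!
With `x = λ⁻¹` and `y = μ⁻¹` the Lax matrix `ℓ(λ)` is polynomial in `x`, and the R-matrix
is homogeneous: `R(λ, μ) = λμ · R(y, x)`. Since `λμ` is central it cancels, leaving an
identity between polynomial expressions over the commutative ring of central elements. Each
entry of either side is then a combination of words in `𝐮, 𝐰`; the Weyl relation brings every
word to the normal order `𝐰ⁱ𝐮ʲ`, after which the coefficients agree identically.
-/

open Matrix

namespace TodaChain

section Kronecker

variable {R : Type*} [Mul R]

def kroneckerFin {m n p r : ℕ} (A : Matrix (Fin m) (Fin n) R) (B : Matrix (Fin p) (Fin r) R) :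
    Matrix (Fin (m * p)) (Fin (n * r)) R :=
  reindex finProdFinEquiv finProdFinEquiv (kroneckerMap (· * ·) A B)

theorem kroneckerFin_two_two (A B : Matrix (Fin 2) (Fin 2) R) :
    kroneckerFin A B =
      !![A 0 0 * B 0 0, A 0 0 * B 0 1, A 0 1 * B 0 0, A 0 1 * B 0 1;
         A 0 0 * B 1 0, A 0 0 * B 1 1, A 0 1 * B 1 0, A 0 1 * B 1 1;
         A 1 0 * B 0 0, A 1 0 * B 0 1, A 1 1 * B 0 0, A 1 1 * B 0 1;
         A 1 0 * B 1 0, A 1 0 * B 1 1, A 1 1 * B 1 0, A 1 1 * B 1 1] := by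
  ext i j
  fin_cases i <;> fin_cases j <;> rfl

end Kronecker

variable {S R : Type*} [CommRing S] [Ring R] [Algebra S R]

def sixVertex (ω l m : S) : Matrix (Fin 4) (Fin 4) S :=
  !![l - ω * m, 0, 0, 0;
     0, l - m, m * (1 - ω), 0;
     0, l * (1 - ω), ω * (l - m), 0;
     0, 0, 0, l - ω * m]

theorem sixVertex_eq_smul {ω l m x y : S} (hl : l * x = 1) (hm : m * y = 1) :
    sixVertex ω l m = (l * m) • sixVertex ω y x := by
  ext i j
  fin_cases i <;> fin_cases j <;>
    simp only [sixVertex, Fin.zero_eta, Fin.isValue, Fin.mk_one, Fin.reduceFinMk, of_apply,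
      cons_val', cons_val, cons_val_zero, cons_val_one, cons_val_fin_one, Matrix.smul_apply,
      smul_eq_mul, mul_zero] <;>
    grind

/-- The Lax matrix `ℓ(λ)` at `x = λ⁻¹`, with `q` in the role of `ω^{1/2}`. -/
def todaLax (q κ x : S) (u w : R) : Matrix (Fin 2) (Fin 2) R :=
  !![1 + (κ * x) • (u * w), -((q * x) • u); w, 0]

theorem mul_mul_eq_smul_mul_mul {ω : S} {u w : R} (h : u * w = ω • (w * u)) (t : R) :
    u * (w * t) = ω • (w * (u * t)) := by
  rw [← mul_assoc, h, smul_mul_assoc, mul_assoc]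

theorem todaLax_RLL_polynomial (q ω κ x y : S) {u w : R} (hweyl : u * w = ω • (w * u)) :
    (sixVertex ω y x).map (algebraMap S R) *
        kroneckerFin (todaLax q κ x u w) (todaLax q κ y u w) =
      kroneckerFin 1 (todaLax q κ y u w) * kroneckerFin (todaLax q κ x u w) 1 *
        (sixVertex ω y x).map (algebraMap S R) := by
  simp only [kroneckerFin_two_two, todaLax, sixVertex]
  ext i j
  fin_cases i <;> fin_cases j <;>
    simp only [Fin.isValue, Fin.zero_eta, Fin.mk_one, Fin.reduceFinMk, Nat.reduceMul, mul_apply,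
      Fin.sum_univ_four, map_apply, Algebra.algebraMap_eq_smul_one, of_apply, cons_val', cons_val,
      cons_val_zero, cons_val_one, cons_val_fin_one, one_apply_eq, one_apply_ne, ne_eq,
      Fin.reduceEq, not_false_eq_true, zero_mul, mul_zero, one_mul, mul_one, zero_smul, smul_zero,
      add_zero, zero_add, mul_neg, neg_mul, smul_neg, mul_add, add_mul, mul_sub, mul_assoc,
      smul_mul_assoc, mul_smul_comm, smul_add, smul_smul, hweyl, mul_mul_eq_smul_mul_mul hweyl] <;>
    module

theorem todaLax_RLL (q κ : S) {ω l m x y : S} (hl : l * x = 1) (hm : m * y = 1) {u w : R}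
    (hweyl : u * w = ω • (w * u)) :
    (sixVertex ω l m).map (algebraMap S R) *
        kroneckerFin (todaLax q κ x u w) (todaLax q κ y u w) =
      kroneckerFin 1 (todaLax q κ y u w) * kroneckerFin (todaLax q κ x u w) 1 *
        (sixVertex ω l m).map (algebraMap S R) := by
  have hmap : ∀ (c : S) (A : Matrix (Fin 4) (Fin 4) S),
      (c • A).map (algebraMap S R) = c • A.map (algebraMap S R) := fun c A =>
    Matrix.map_smul _ c (fun a => by simp [Algebra.smul_def]) A
  rw [sixVertex_eq_smul hl hm, hmap, Matrix.smul_mul, Matrix.mul_smul,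
    todaLax_RLL_polynomial q ω κ x y hweyl]

end TodaChain

open TodaChain

/-- The RLL intertwining relation
`R(λ,μ)(ℓ(λ) ⊗ ℓ(μ)) = (1 ⊗ ℓ(μ))(ℓ(λ) ⊗ 1)R(λ,μ)` for the quantum
relativistic Toda Lax matrix `ℓ(λ) = [[1 + (κ/λ)𝐮𝐰, -(ω^{1/2}/λ)𝐮],[𝐰, 0]]`
and the six-vertex R-matrix.  Both sides are written as explicit 4×4 matrices
over the noncommutative ring `R`, the Kronecker products being taken with the
standard index ordering `(i,k) ↦ 2i + k`, both tensor factors sharing the same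
Weyl pair `𝐮, 𝐰` with `𝐮𝐰 = ω𝐰𝐮`, `ω = (ω^{1/2})²`. -/
theorem toda_RLL_relation {R : Type*} [Ring R]
    (ωh ω κ : R) (lu mu : Rˣ) (u w : R)
    (hω : ω = ωh ^ 2)
    (hωhc : ∀ r : R, ωh * r = r * ωh)
    (hκc : ∀ r : R, κ * r = r * κ)
    (hlc : ∀ r : R, (lu : R) * r = r * (lu : R))
    (hmc : ∀ r : R, (mu : R) * r = r * (mu : R))
    (hweyl : u * w = ω * (w * u))
    -- entries of ℓ(λ) and ℓ(μ):
    (a b a' b' c : R)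
    (ha : a = 1 + κ * (↑lu⁻¹ : R) * (u * w)) (hb : b = -(ωh * (↑lu⁻¹ : R) * u))
    (ha' : a' = 1 + κ * (↑mu⁻¹ : R) * (u * w)) (hb' : b' = -(ωh * (↑mu⁻¹ : R) * u))
    (hc : c = w)
    (Rm lKl oneKl lKone : Matrix (Fin 4) (Fin 4) R)
    -- the six-vertex R-matrix:
    (hRm : Rm = !![(lu : R) - ω * (mu : R), 0, 0, 0;
                   0, (lu : R) - (mu : R), (mu : R) * (1 - ω), 0;
                   0, (lu : R) * (1 - ω), ω * ((lu : R) - (mu : R)), 0;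
                   0, 0, 0, (lu : R) - ω * (mu : R)])
    -- ℓ(λ) ⊗ ℓ(μ):
    (hlKl : lKl = !![a * a', a * b', b * a', b * b';
                     a * c, 0, b * c, 0;
                     c * a', c * b', 0, 0;
                     c * c, 0, 0, 0])
    -- 1 ⊗ ℓ(μ):
    (honeKl : oneKl = !![a', b', 0, 0;
                         c, 0, 0, 0;
                         0, 0, a', b';
                         0, 0, c, 0])
    -- ℓ(λ) ⊗ 1:
    (hlKone : lKone = !![a, 0, b, 0;
                         0, a, 0, b;
                         c, 0, 0, 0;
                         0, c, 0, 0]) :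
    Rm * lKl = oneKl * lKone * Rm := by
  have central : ∀ z : R, (∀ r, z * r = r * z) → z ∈ Subring.center R := fun z hz =>
    Subring.mem_center_iff.2 fun r => (hz r).symm
  let q : Subring.center R := ⟨ωh, central _ hωhc⟩
  let k : Subring.center R := ⟨κ, central _ hκc⟩
  let Ω : Subring.center R := ⟨ω, hω ▸ pow_mem q.2 2⟩
  let l : Subring.center R := ⟨lu, central _ hlc⟩
  let m : Subring.center R := ⟨mu, central _ hmc⟩
  let x : Subring.center R := ⟨↑lu⁻¹, Set.units_inv_mem_center l.2⟩
  let y : Subring.center R := ⟨↑mu⁻¹, Set.units_inv_mem_center m.2⟩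
  have hℓl : todaLax q k x u w = !![a, b; c, 0] := by subst ha hb hc; rfl
  have hℓm : todaLax q k y u w = !![a', b'; c, 0] := by subst ha' hb' hc; rfl
  have hR : (sixVertex Ω l m).map (algebraMap _ R) = Rm := by
    subst hRm; ext i j; fin_cases i <;> fin_cases j <;> rfl
  have hlKl' : kroneckerFin !![a, b; c, 0] !![a', b'; c, 0] = lKl := by
    rw [hlKl, kroneckerFin_two_two]; simp
  have honeKl' : kroneckerFin (1 : Matrix (Fin 2) (Fin 2) R) !![a', b'; c, 0] = oneKl := by
    rw [honeKl, kroneckerFin_two_two]; simp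
  have hlKone' : kroneckerFin !![a, b; c, 0] (1 : Matrix (Fin 2) (Fin 2) R) = lKone := by
    rw [hlKone, kroneckerFin_two_two]; simp
  have key := todaLax_RLL q k (Subtype.ext lu.mul_inv : l * x = 1)
    (Subtype.ext mu.mul_inv : m * y = 1) (ω := Ω) hweyl
  rwa [hℓl, hℓm, hR, hlKl', honeKl', hlKone'] at key
end
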